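/- Let a,b,c > 0 with b^4 < 1 and define f as above. Then f maps the interval [b^6, b^{-6}] into itself, and the unique positive fixed point of f lies in [b^6, b^{-6}]. -/

import Mathlib

/-!
After factoring out `1 - b⁴`, the differences `num - b⁶ * den` and `den - b⁶ * num`, and the cross
difference `num x * den y - num y * den x` divided by `y - x`, are positive combinations of monomials in `x, y ≥ 0`
and even powers of `a, b, c`. So for `b⁴ ≤ 1` the map `f` sends `[0, ∞)` into `[b⁶, b⁻⁶]` and is
antitone there. Bolzano's theorem on this invariant interval gives a fixed point, and an antitone
map has at most one.
-/

open Set Function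

theorem AntitoneOn.eq_of_isFixedPt {α : Type*} [LinearOrder α] {f : α → α} {s : Set α}
    (hf : AntitoneOn f s) {x y : α} (hx : x ∈ s) (hy : y ∈ s)
    (hfx : IsFixedPt f x) (hfy : IsFixedPt f y) : x = y := by
  rcases le_total x y with hxy | hyx
  · exact hxy.antisymm (hfy ▸ hfx ▸ hf hx hy hxy)
  · exact (hyx.antisymm (hfx ▸ hfy ▸ hf hy hx hyx)).symm

namespace CubicRatio

variable (a b c : ℝ)

def num (x : ℝ) : ℝ := c^4 + 3*a^2*b^2*x + 3*a^4*b^4*x^2 + a^6*b^6*c^4*x^3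

def den (x : ℝ) : ℝ := b^6*c^4 + 3*a^2*b^4*x + 3*a^4*b^2*x^2 + a^6*c^4*x^3

noncomputable def f (x : ℝ) : ℝ := num a b c x / den a b c x

variable {a b c}

theorem den_pos (hb : b ≠ 0) (hc : c ≠ 0) {x : ℝ} (hx : 0 ≤ x) : 0 < den a b c x := by
  unfold den
  positivity

theorem pow_six_mul_den_le_num (hb4 : b^4 ≤ 1) {x : ℝ} (hx : 0 ≤ x) :
    b^6 * den a b c x ≤ num a b c x := by
  have h : num a b c x - b^6 * den a b c x =
      (1 - b^4) * (c^4*(1 + b^4 + b^8) + 3*a^2*b^2*(1 + b^4)*x + 3*a^4*b^4*x^2) := by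
    unfold num den; ring
  have : 0 ≤ 1 - b^4 := by linarith
  nlinarith [show 0 ≤ c^4*(1 + b^4 + b^8) + 3*a^2*b^2*(1 + b^4)*x + 3*a^4*b^4*x^2 by positivity]

theorem pow_six_mul_num_le_den (hb4 : b^4 ≤ 1) {x : ℝ} (hx : 0 ≤ x) :
    b^6 * num a b c x ≤ den a b c x := by
  have h : den a b c x - b^6 * num a b c x =
      (1 - b^4) * (x * (3*a^2*b^4 + 3*a^4*b^2*(1 + b^4)*x + a^6*c^4*(1 + b^4 + b^8)*x^2)) := by
    unfold num den; ring
  have : 0 ≤ 1 - b^4 := by linarith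
  nlinarith [show 0 ≤ x * (3*a^2*b^4 + 3*a^4*b^2*(1 + b^4)*x + a^6*c^4*(1 + b^4 + b^8)*x^2) by
    positivity]

theorem f_mem_Icc (hb : b ≠ 0) (hc : c ≠ 0) (hb4 : b^4 ≤ 1) {x : ℝ} (hx : 0 ≤ x) :
    f a b c x ∈ Icc (b^6) (b^6)⁻¹ := by
  have hden := den_pos (a := a) hb hc hx
  refine ⟨(le_div_iff₀ hden).2 (pow_six_mul_den_le_num hb4 hx), ?_⟩
  rw [f, div_le_iff₀ hden, ← div_eq_inv_mul, le_div_iff₀' (by positivity)]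
  exact pow_six_mul_num_le_den hb4 hx

theorem num_mul_den_le_num_mul_den (hb4 : b^4 ≤ 1) {x y : ℝ} (hx : 0 ≤ x) (hxy : x ≤ y) :
    num a b c y * den a b c x ≤ num a b c x * den a b c y := by
  have hy : 0 ≤ y := hx.trans hxy
  have h : num a b c x * den a b c y - num a b c y * den a b c x =
      (1 - b^4) * (y - x) * (3*a^2*b^4*c^4 + 3*a^4*b^2*c^4*(1 + b^4)*(x + y)
        + a^6*c^8*(1 + b^4 + b^8)*(x^2 + x*y + y^2) + 9*a^6*b^4*x*y
        + 3*a^8*b^2*c^4*(1 + b^4)*x*y*(x + y) + 3*a^10*b^4*c^4*x^2*y^2) := by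
    unfold num den; ring
  have : 0 ≤ (1 - b^4) * (y - x) := mul_nonneg (by linarith) (by linarith)
  nlinarith [show 0 ≤ 3*a^2*b^4*c^4 + 3*a^4*b^2*c^4*(1 + b^4)*(x + y)
    + a^6*c^8*(1 + b^4 + b^8)*(x^2 + x*y + y^2) + 9*a^6*b^4*x*y
    + 3*a^8*b^2*c^4*(1 + b^4)*x*y*(x + y) + 3*a^10*b^4*c^4*x^2*y^2 by positivity]

theorem antitoneOn_f (hb : b ≠ 0) (hc : c ≠ 0) (hb4 : b^4 ≤ 1) :
    AntitoneOn (f a b c) (Ici 0) := fun x hx y hy hxy => by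
  rw [f, f, div_le_div_iff₀ (den_pos hb hc hy) (den_pos hb hc hx)]
  exact num_mul_den_le_num_mul_den hb4 hx hxy

theorem continuousOn_f (hb : b ≠ 0) (hc : c ≠ 0) : ContinuousOn (f a b c) (Ici 0) := by
  refine ContinuousOn.div (by unfold num; fun_prop) (by unfold den; fun_prop) ?_
  exact fun x hx => (den_pos hb hc hx).ne'

end CubicRatio

open CubicRatio in
theorem f_mapsTo_and_fixed_point_in_interval (a b c : ℝ)
    (hb : 0 < b) (hc : 0 < c) (hb4 : b^4 < 1) :
    Set.MapsTo (fun x : ℝ =>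
      (c^4 + 3*a^2*b^2*x + 3*a^4*b^4*x^2 + a^6*b^6*c^4*x^3) /
        (b^6*c^4 + 3*a^2*b^4*x + 3*a^4*b^2*x^2 + a^6*c^4*x^3))
      (Set.Icc (b^6) ((b^6)⁻¹)) (Set.Icc (b^6) ((b^6)⁻¹)) ∧
    (∃! x : ℝ, 0 < x ∧
      (c^4 + 3*a^2*b^2*x + 3*a^4*b^4*x^2 + a^6*b^6*c^4*x^3) /
        (b^6*c^4 + 3*a^2*b^4*x + 3*a^4*b^2*x^2 + a^6*c^4*x^3) = x) ∧
    (∀ x : ℝ, 0 < x →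
      (c^4 + 3*a^2*b^2*x + 3*a^4*b^4*x^2 + a^6*b^6*c^4*x^3) /
        (b^6*c^4 + 3*a^2*b^4*x + 3*a^4*b^2*x^2 + a^6*c^4*x^3) = x →
      x ∈ Set.Icc (b^6) ((b^6)⁻¹)) := by
  change MapsTo (f a b c) _ _ ∧ (∃! x, 0 < x ∧ f a b c x = x) ∧
    ∀ x, 0 < x → f a b c x = x → x ∈ _
  have hb6 : 0 < b^6 := by positivity
  have hmem : ∀ x : ℝ, 0 ≤ x → f a b c x ∈ Icc (b^6) (b^6)⁻¹ :=
    fun x => f_mem_Icc hb.ne' hc.ne' hb4.le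
  have hmaps : MapsTo (f a b c) (Icc (b^6) (b^6)⁻¹) (Icc (b^6) (b^6)⁻¹) :=
    fun x hx => hmem x (hb6.le.trans hx.1)
  obtain ⟨x₀, hx₀, hfix⟩ := exists_mem_Icc_isFixedPt_of_mapsTo
    ((continuousOn_f hb.ne' hc.ne').mono fun x hx => hb6.le.trans hx.1)
    (nonempty_Icc.1 ⟨_, hmem 0 le_rfl⟩) hmaps
  refine ⟨hmaps, ⟨x₀, ⟨hb6.trans_le hx₀.1, hfix⟩, fun y hy => ?_⟩,
    fun x hx hfx => hfx ▸ hmem x hx.le⟩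
  exact (antitoneOn_f hb.ne' hc.ne' hb4.le).eq_of_isFixedPt hy.1.le
    (hb6.le.trans hx₀.1) hy.2 hfix
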